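/- arXiv:cs/0506104 — 3 statements merged into one kernel-verified Lean document; each statement's English description precedes it below -/
import Mathlib

section
/- Let t ≥ 2 be an integer and let α_t be the unique real number in the interval (1, 2) satisfying 1 + α_t + α_t² + … + α_t^(t−1) = α_t^t. Then α_t ≤ 2 − 1/2^t, and every t-CNF theory T with n = |At(T)| atoms has at most α_t^n minimal models. -/
open Classical

/-- A literal: `(true, a)` is the atom `a`, `(false, a)` is the negated atom `¬ a`. -/
abbrev Lit : Type := Bool × ℕ

/-- A clause: a finite set of literals, viewed as the disjunction of its literals. -/
abbrev Clause : Type := Finset Lit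

/-- A CNF theory: a finite set of clauses. -/
abbrev CTheory : Type := Finset Clause

/-- A clause is proper: it contains no atom together with its negation. -/
def Clause.ok (c : Clause) : Prop :=
  ∀ a : ℕ, ¬ (((true, a) : Lit) ∈ c ∧ ((false, a) : Lit) ∈ c)

/-- The set of atoms occurring in a clause. -/
def clauseAtoms (c : Clause) : Finset ℕ := c.image Prod.snd

/-- `At(T)`: the set of atoms occurring in a CNF theory. -/
def thAtoms (T : CTheory) : Finset ℕ := T.sup clauseAtoms

/-- A set of atoms `M` satisfies a literal `l`. -/
def satLit (M : Finset ℕ) (l : Lit) : Prop := if l.1 then l.2 ∈ M else l.2 ∉ M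

/-- `M` is a model of the CNF theory `T`. -/
def isModel (M : Finset ℕ) (T : CTheory) : Prop := ∀ c ∈ T, ∃ l ∈ c, satLit M l

/-- `M` is a minimal model of `T`: a model `M ⊆ At(T)` no proper subset of which is a model. -/
def isMinModel (M : Finset ℕ) (T : CTheory) : Prop :=
  isModel M T ∧ M ⊆ thAtoms T ∧ ∀ M' : Finset ℕ, M' ⊂ M → ¬ isModel M' T

/-! Branch on the atoms of a clause `p₁ ∨ … ∨ p_k` with only positive literals (`k ≤ t`).
A minimal model either contains `p₁`, and then without `p₁` it is a minimal model of
`T[p₁ := ⊤]`, or it is a minimal model of `T[p₁ := ⊥]`, in which `p₂ ∨ … ∨ p_k` is again a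
positive clause. Both theories have fewer atoms, so the count obeys
`μ(n) ≤ μ(n-1) + … + μ(n-k)`, i.e. `μ(n) α^k ≤ α^n (1 + α + … + α^(k-1))`, and for `k = t`
the right-hand side is `α^n α^t`. If no clause is positive, `∅` is a model and hence the only
minimal one. The equation for `α` reads `α^t (2 - α) = 1`, whence `2 - α = α^(-t) ≥ 2^(-t)`. -/

def Clause.IsPositive (c : Clause) : Prop := ∀ l ∈ c, l.1 = true

def setAtom (M : Finset ℕ) (p : ℕ) (b : Bool) : Finset ℕ :=
  if b then insert p M else M.erase p

def condition (T : CTheory) (p : ℕ) (b : Bool) : CTheory :=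
  (T.filter fun c => ((b, p) : Lit) ∉ c).image fun c => c.filter fun l => l.2 ≠ p

def minModels (T : CTheory) : Set (Finset ℕ) := {M | isMinModel M T}

lemma satLit_setAtom_of_ne {M : Finset ℕ} {p : ℕ} {b : Bool} {l : Lit} (hl : l.2 ≠ p) :
    satLit (setAtom M p b) l ↔ satLit M l := by
  cases b <;> simp [setAtom, satLit, hl]

lemma satLit_setAtom_self {M : Finset ℕ} {p : ℕ} {b b' : Bool} :
    satLit (setAtom M p b) (b', p) ↔ b' = b := by
  cases b <;> cases b' <;> simp [setAtom, satLit]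

lemma mem_thAtoms {T : CTheory} {c : Clause} {l : Lit} (hc : c ∈ T) (hl : l ∈ c) :
    l.2 ∈ thAtoms T :=
  Finset.mem_sup.mpr ⟨c, hc, Finset.mem_image_of_mem _ hl⟩

lemma isModel_condition_iff {T : CTheory} {p : ℕ} {b : Bool} {M : Finset ℕ} :
    isModel M (condition T p b) ↔ isModel (setAtom M p b) T := by
  constructor
  · intro h c hc
    by_cases hbp : ((b, p) : Lit) ∈ c
    · exact ⟨_, hbp, satLit_setAtom_self.mpr rfl⟩
    obtain ⟨l, hl, hsat⟩ := h _ (Finset.mem_image_of_mem _ (Finset.mem_filter.mpr ⟨hc, hbp⟩))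
    obtain ⟨hlc, hlp⟩ := Finset.mem_filter.mp hl
    exact ⟨l, hlc, (satLit_setAtom_of_ne hlp).mpr hsat⟩
  · intro h c' hc'
    obtain ⟨c, hc, rfl⟩ := Finset.mem_image.mp hc'
    obtain ⟨hcT, hbp⟩ := Finset.mem_filter.mp hc
    obtain ⟨l, hl, hsat⟩ := h c hcT
    have hlp : l.2 ≠ p := by
      rintro hlp
      obtain ⟨b', a⟩ := l
      obtain rfl : a = p := hlp
      obtain rfl : b' = b := satLit_setAtom_self.mp hsat
      exact hbp hl
    exact ⟨l, Finset.mem_filter.mpr ⟨hl, hlp⟩, (satLit_setAtom_of_ne hlp).mp hsat⟩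

lemma thAtoms_condition_subset (T : CTheory) (p : ℕ) (b : Bool) :
    thAtoms (condition T p b) ⊆ (thAtoms T).erase p := by
  intro a ha
  obtain ⟨c', hc', ha⟩ := Finset.mem_sup.mp ha
  obtain ⟨c, hc, rfl⟩ := Finset.mem_image.mp hc'
  obtain ⟨l, hl, rfl⟩ := Finset.mem_image.mp ha
  obtain ⟨hlc, hlp⟩ := Finset.mem_filter.mp hl
  exact Finset.mem_erase.mpr ⟨hlp, mem_thAtoms (Finset.mem_filter.mp hc).1 hlc⟩

lemma card_le_of_mem_condition {T : CTheory} {p : ℕ} {b : Bool} {t : ℕ}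
    (hT : ∀ c ∈ T, c.card ≤ t) : ∀ c ∈ condition T p b, c.card ≤ t := by
  intro c' hc'
  obtain ⟨c, hc, rfl⟩ := Finset.mem_image.mp hc'
  exact (Finset.card_filter_le _ _).trans (hT c (Finset.mem_filter.mp hc).1)

lemma exists_positive_mem_condition_false {T : CTheory} {c : Clause} {p : ℕ} (hc : c ∈ T)
    (hpos : Clause.IsPositive c) (hp : ((true, p) : Lit) ∈ c) :
    ∃ c' ∈ condition T p false, Clause.IsPositive c' ∧ c'.card < c.card := by
  refine ⟨c.filter fun l => l.2 ≠ p, ?_, fun l hl => hpos l (Finset.mem_filter.mp hl).1, ?_⟩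
  · exact Finset.mem_image_of_mem _ (Finset.mem_filter.mpr ⟨hc, fun h => by simpa using hpos _ h⟩)
  · exact Finset.card_lt_card (Finset.filter_ssubset.mpr ⟨_, hp, by simp⟩)

lemma subset_thAtoms_of_minimal {T : CTheory} {M : Finset ℕ} (h : Minimal (isModel · T) M) :
    M ⊆ thAtoms T := by
  intro a haM
  by_contra ha
  refine h.not_prop_of_lt (Finset.erase_ssubset haM) fun c hc => ?_
  obtain ⟨l, hl, hsat⟩ := h.prop c hc
  have hla : l.2 ≠ a := fun hla => ha (hla ▸ mem_thAtoms hc hl)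
  exact ⟨l, hl, (satLit_setAtom_of_ne (b := false) hla).mpr hsat⟩

lemma mem_minModels {T : CTheory} {M : Finset ℕ} :
    M ∈ minModels T ↔ Minimal (isModel · T) M := by
  refine ⟨fun ⟨hM, _, hmin⟩ => minimal_iff_forall_lt.mpr ⟨hM, hmin⟩,
    fun h => ⟨h.prop, subset_thAtoms_of_minimal h, fun _ => h.not_prop_of_lt⟩⟩

lemma minModels_finite (T : CTheory) : (minModels T).Finite :=
  (thAtoms T).powerset.finite_toSet.subset fun _ hM =>
    Finset.mem_coe.mpr (Finset.mem_powerset.mpr hM.2.1)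

lemma minimal_condition_false {T : CTheory} {p : ℕ} {M : Finset ℕ}
    (h : Minimal (isModel · T) M) (hp : p ∉ M) :
    Minimal (isModel · (condition T p false)) M := by
  have hM : setAtom M p false = M := Finset.erase_eq_of_notMem hp
  refine minimal_iff_forall_lt.mpr
    ⟨isModel_condition_iff.mpr (by rw [hM]; exact h.prop), fun N hN hmod => ?_⟩
  exact h.not_prop_of_lt ((Finset.erase_subset p N).trans_lt hN) (isModel_condition_iff.mp hmod)

lemma minimal_condition_true {T : CTheory} {p : ℕ} {M : Finset ℕ}
    (h : Minimal (isModel · T) M) (hp : p ∈ M) :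
    Minimal (isModel · (condition T p true)) (M.erase p) := by
  have hM : setAtom (M.erase p) p true = M := Finset.insert_erase hp
  refine minimal_iff_forall_lt.mpr
    ⟨isModel_condition_iff.mpr (by rw [hM]; exact h.prop), fun N hN hmod => ?_⟩
  have hpN : p ∉ N := fun hpN => Finset.notMem_erase p M (hN.le hpN)
  have hNM : insert p N = M :=
    h.eq_of_le (isModel_condition_iff.mp hmod)
      (Finset.insert_subset hp (hN.le.trans (Finset.erase_subset p M)))
  exact hN.ne (by rw [← hNM, Finset.erase_insert hpN])

lemma ncard_minModels_le_add (T : CTheory) (p : ℕ) :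
    (minModels T).ncard ≤
      (minModels (condition T p true)).ncard + (minModels (condition T p false)).ncard := by
  have hsplit : minModels T = {M ∈ minModels T | p ∈ M} ∪ {M ∈ minModels T | p ∉ M} := by
    ext M; by_cases p ∈ M <;> simp [*]
  rw [hsplit]
  refine (Set.ncard_union_le _ _).trans (add_le_add ?_ ?_)
  · refine Set.ncard_le_ncard_of_injOn (·.erase p)
      (fun M ⟨hM, hp⟩ => mem_minModels.mpr (minimal_condition_true (mem_minModels.mp hM) hp))
      (fun M ⟨_, hM⟩ N ⟨_, hN⟩ h => ?_) (minModels_finite _)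
    rw [← Finset.insert_erase hM, ← Finset.insert_erase hN]
    exact congrArg (insert p) h
  · exact Set.ncard_le_ncard (fun M ⟨hM, hp⟩ =>
      mem_minModels.mpr (minimal_condition_false (mem_minModels.mp hM) hp)) (minModels_finite _)

lemma minModels_eq_empty_of_empty_mem {T : CTheory} (h : ∅ ∈ T) : minModels T = ∅ :=
  Set.eq_empty_of_forall_notMem fun M hM => by
    obtain ⟨l, hl, _⟩ := hM.1 ∅ h
    exact Finset.notMem_empty l hl

lemma isModel_empty_of_forall_not_isPositive {T : CTheory}
    (h : ∀ c ∈ T, ¬ Clause.IsPositive c) : isModel ∅ T := by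
  intro c hc
  obtain ⟨⟨b, a⟩, hl, hb⟩ := not_forall₂.mp (h c hc)
  exact ⟨_, hl, by simp_all [satLit]⟩

lemma minModels_subset_singleton_empty {T : CTheory} (h : isModel ∅ T) :
    minModels T ⊆ {∅} :=
  fun M hM => ((mem_minModels.mp hM).eq_of_le h (Finset.empty_subset M)).symm

lemma ncard_minModels_mul_pow_le {t : ℕ} {α : ℝ} (hα : 1 ≤ α) (k : ℕ) {T : CTheory} {c : Clause}
    (hc : c ∈ T) (hpos : Clause.IsPositive c) (hck : c.card ≤ k) (hT : ∀ c ∈ T, c.card ≤ t)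
    (bound : ∀ T' : CTheory, (∀ c ∈ T', c.card ≤ t) → (thAtoms T').card < (thAtoms T).card →
      ((minModels T').ncard : ℝ) ≤ α ^ (thAtoms T').card) :
    ((minModels T).ncard : ℝ) * α ^ k ≤ α ^ (thAtoms T).card * ∑ i ∈ Finset.range k, α ^ i := by
  induction k generalizing T c with
  | zero =>
    rw [Finset.card_eq_zero.mp (Nat.le_zero.mp hck)] at hc
    simp [minModels_eq_empty_of_empty_mem hc]
  | succ k ih =>
    obtain rfl | ⟨⟨b, p⟩, hl⟩ := c.eq_empty_or_nonempty
    · simp only [minModels_eq_empty_of_empty_mem hc, Set.ncard_empty, Nat.cast_zero, zero_mul]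
      positivity
    obtain rfl : b = true := hpos _ hl
    obtain ⟨n, hn⟩ : ∃ n, (thAtoms T).card = n + 1 :=
      Nat.exists_eq_succ_of_ne_zero (Finset.card_ne_zero_of_mem (mem_thAtoms hc hl))
    have hatoms (b : Bool) : (thAtoms (condition T p b)).card ≤ n := by
      have := Finset.card_le_card (thAtoms_condition_subset T p b)
      rw [Finset.card_erase_of_mem (mem_thAtoms hc hl), hn] at this
      exact this
    have htrue : ((minModels (condition T p true)).ncard : ℝ) ≤ α ^ n :=
      (bound _ (card_le_of_mem_condition hT) (by grind)).trans
        (pow_le_pow_right₀ hα (hatoms true))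
    obtain ⟨c', hc', hpos', hlt⟩ := exists_positive_mem_condition_false hc hpos hl
    have hfalse : ((minModels (condition T p false)).ncard : ℝ) * α ^ k ≤
        α ^ n * ∑ i ∈ Finset.range k, α ^ i :=
      (ih hc' hpos' (by omega) (card_le_of_mem_condition hT)
        fun T' hT' hlt' => bound T' hT' (by grind)).trans
        (mul_le_mul_of_nonneg_right (pow_le_pow_right₀ hα (hatoms false)) (by positivity))
    have hsplit : ((minModels T).ncard : ℝ) ≤
        (minModels (condition T p true)).ncard + (minModels (condition T p false)).ncard := by
      exact_mod_cast ncard_minModels_le_add T p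
    calc ((minModels T).ncard : ℝ) * α ^ (k + 1)
        ≤ ((minModels (condition T p true)).ncard + (minModels (condition T p false)).ncard)
            * α ^ (k + 1) := by gcongr
      _ = (minModels (condition T p true)).ncard * α ^ (k + 1)
            + α * ((minModels (condition T p false)).ncard * α ^ k) := by ring
      _ ≤ α ^ n * α ^ (k + 1) + α * (α ^ n * ∑ i ∈ Finset.range k, α ^ i) := by gcongr
      _ = α ^ (thAtoms T).card * ∑ i ∈ Finset.range (k + 1), α ^ i := by
        rw [hn, Finset.sum_range_succ]; ring

lemma ncard_minModels_le_pow {t : ℕ} {α : ℝ} (hα : 1 ≤ α)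
    (heq : ∑ i ∈ Finset.range t, α ^ i = α ^ t) (T : CTheory) (hT : ∀ c ∈ T, c.card ≤ t) :
    ((minModels T).ncard : ℝ) ≤ α ^ (thAtoms T).card := by
  induction h : (thAtoms T).card using Nat.strong_induction_on generalizing T with
  | _ n ih =>
  by_cases hpos : ∃ c ∈ T, Clause.IsPositive c
  · obtain ⟨c, hc, hpos⟩ := hpos
    have := ncard_minModels_mul_pow_le hα t hc hpos (hT c hc) hT
      fun T' hT' hlt => ih _ (h ▸ hlt) T' hT' rfl
    rw [heq, h] at this
    exact le_of_mul_le_mul_right this (by positivity)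
  · push Not at hpos
    calc ((minModels T).ncard : ℝ)
        ≤ ({∅} : Set (Finset ℕ)).ncard := by
          exact_mod_cast Set.ncard_le_ncard
            (minModels_subset_singleton_empty (isModel_empty_of_forall_not_isPositive hpos))
      _ = 1 := by simp
      _ ≤ α ^ n := one_le_pow₀ hα

lemma le_two_sub_one_div_two_pow {t : ℕ} {α : ℝ} (hα : 0 ≤ α)
    (heq : ∑ i ∈ Finset.range t, α ^ i = α ^ t) : α ≤ 2 - 1 / 2 ^ t := by
  have hgeom := geom_sum_mul α t
  rw [heq] at hgeom
  have hone : α ^ t * (2 - α) = 1 := by linear_combination -hgeom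
  have hpow : 0 < α ^ t := (pow_nonneg hα t).lt_of_ne fun h0 => by simp [← h0] at hone
  have hα2 : α ≤ 2 := by nlinarith
  have : 1 / 2 ^ t ≤ 1 / α ^ t := one_div_le_one_div_of_le hpow (pow_le_pow_left₀ hα hα2 t)
  rw [← eq_one_div_of_mul_eq_one_right hone] at this
  linarith

theorem t_cnf_minimal_models_bound_general (t : ℕ) (α : ℝ)
    (hα1 : 1 < α)
    (heq : ∑ i ∈ Finset.range t, α ^ i = α ^ t) :
    α ≤ 2 - 1 / 2 ^ t ∧
    ∀ T : CTheory, (∀ c ∈ T, Clause.ok c) → (∀ c ∈ T, c.card ≤ t) →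
      (({M : Finset ℕ | isMinModel M T}.ncard : ℝ)) ≤ α ^ (thAtoms T).card :=
  ⟨le_two_sub_one_div_two_pow (by linarith) heq,
    fun T _ hT => ncard_minModels_le_pow hα1.le heq T hT⟩

/-- Let `t ≥ 2` and let `α` be the (unique) real in `(1,2)` with
`1 + α + α² + … + α^(t−1) = α^t`. Then `α ≤ 2 − 1/2^t`, and every `t`-CNF theory with
`n = |At(T)|` atoms has at most `α^n` minimal models. -/
theorem t_cnf_minimal_models_bound (t : ℕ) (ht : 2 ≤ t) (α : ℝ)
    (hα1 : 1 < α) (hα2 : α < 2)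
    (heq : ∑ i ∈ Finset.range t, α ^ i = α ^ t) :
    α ≤ 2 - 1 / 2 ^ t ∧
    ∀ T : CTheory, (∀ c ∈ T, Clause.ok c) → (∀ c ∈ T, c.card ≤ t) →
      (({M : Finset ℕ | isMinModel M T}.ncard : ℝ)) ≤ α ^ (thAtoms T).card :=
  t_cnf_minimal_models_bound_general t α hα1 heq
end

section
/- Let T be a CNF theory, L ⊆ Lit(T), and X ⊆ At(T) a set of atoms consistent with L. If X is a minimal model of T, then X \ L⁺ is a minimal model of T_L. -/
open Classical

/-- The dual of a literal. -/
def litNeg (l : Lit) : Lit := (!l.1, l.2)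

/-- `L̄`: the set of duals of the literals of `L`. -/
def negSet (L : Finset Lit) : Finset Lit := L.image litNeg

/-- `L⁺`: the set of atoms belonging to `L`. -/
def posAtoms (L : Finset Lit) : Finset ℕ := (L.filter (fun l => l.1 = true)).image Prod.snd

/-- `L⁻`: the set of atoms whose negation belongs to `L`. -/
def negAtoms (L : Finset Lit) : Finset ℕ := (L.filter (fun l => l.1 = false)).image Prod.snd

/-- A set of atoms `M` is consistent with a set of literals `L` if `L⁺ ⊆ M` and `L⁻ ∩ M = ∅`. -/
def consistentWith (M : Finset ℕ) (L : Finset Lit) : Prop :=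
  posAtoms L ⊆ M ∧ ∀ a ∈ negAtoms L, a ∉ M

/-- `Lit(T)`: the set of all literals over the atoms of `T`. -/
def litsOf (T : CTheory) : Finset Lit :=
  (thAtoms T).image (fun a => ((true, a) : Lit)) ∪
    (thAtoms T).image (fun a => ((false, a) : Lit))

/-- `T_L = {c \ L̄ : c ∈ T, c ∩ L = ∅}`. -/
def reduceTh (T : CTheory) (L : Finset Lit) : CTheory :=
  (T.filter (fun c => ∀ l ∈ c, l ∉ L)).image (fun c => c \ negSet L)


/-! A model `M` consistent with `L` satisfies every clause meeting `L`, and falsifies every literal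
of `L̄`, so it satisfies `T` exactly when it satisfies `T_L`. No atom of `L⁺` occurs in `T_L`, so
moving such atoms in or out of a set does not change whether it satisfies `T_L`. Hence every
`M ⊆ X` with `L⁺ ⊆ M` that satisfies `T_L` is a model of `T`, and minimality of `X` forces
`M = X`; applied to `X.erase a` and to `M' ∪ L⁺` this gives both `X \ L⁺ ⊆ At(T_L)` and the
minimality of `X \ L⁺`. -/

lemma mem_posAtoms {L : Finset Lit} {a : ℕ} : a ∈ posAtoms L ↔ ((true, a) : Lit) ∈ L := by
  simp [posAtoms]

lemma mem_negAtoms {L : Finset Lit} {a : ℕ} : a ∈ negAtoms L ↔ ((false, a) : Lit) ∈ L := by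
  simp [negAtoms]

lemma mem_negSet {L : Finset Lit} {l : Lit} : l ∈ negSet L ↔ litNeg l ∈ L := by
  simp only [negSet, Finset.mem_image]
  constructor
  · rintro ⟨m, hm, rfl⟩
    simpa [litNeg] using hm
  · exact fun h => ⟨litNeg l, h, by simp [litNeg]⟩

lemma mem_thAtoms_s4 {T : CTheory} {a : ℕ} : a ∈ thAtoms T ↔ ∃ c ∈ T, ∃ l ∈ c, l.2 = a := by
  simp [thAtoms, clauseAtoms]

lemma mem_reduceTh {T : CTheory} {L : Finset Lit} {c' : Clause} :
    c' ∈ reduceTh T L ↔ ∃ c ∈ T, (∀ l ∈ c, l ∉ L) ∧ c \ negSet L = c' := by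
  simp [reduceTh, and_assoc]

lemma satLit_congr {M M' : Finset ℕ} {l : Lit} (h : l.2 ∈ M ↔ l.2 ∈ M') :
    satLit M l ↔ satLit M' l := by
  unfold satLit
  split_ifs <;> simp [h]

lemma isModel_congr {M M' : Finset ℕ} {T : CTheory} (h : ∀ a ∈ thAtoms T, a ∈ M ↔ a ∈ M') :
    isModel M T ↔ isModel M' T := by
  have hlit : ∀ c ∈ T, ∀ l ∈ c, satLit M l ↔ satLit M' l := fun c hc l hl =>
    satLit_congr (h _ (mem_thAtoms_s4.2 ⟨c, hc, l, hl, rfl⟩))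
  refine forall₂_congr fun c hc => ?_
  exact ⟨fun ⟨l, hl, hs⟩ => ⟨l, hl, (hlit c hc l hl).1 hs⟩,
    fun ⟨l, hl, hs⟩ => ⟨l, hl, (hlit c hc l hl).2 hs⟩⟩

lemma isModel_union_of_disjoint {M S : Finset ℕ} {T : CTheory} (h : Disjoint S (thAtoms T)) :
    isModel (M ∪ S) T ↔ isModel M T :=
  isModel_congr fun a ha => by simp [Finset.disjoint_right.1 h ha]

lemma isModel_sdiff_of_disjoint {M S : Finset ℕ} {T : CTheory} (h : Disjoint S (thAtoms T)) :
    isModel (M \ S) T ↔ isModel M T :=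
  isModel_congr fun a ha => by simp [Finset.disjoint_right.1 h ha]

lemma disjoint_posAtoms_thAtoms_reduceTh (T : CTheory) (L : Finset Lit) :
    Disjoint (posAtoms L) (thAtoms (reduceTh T L)) := by
  refine Finset.disjoint_left.2 fun a haL ha => ?_
  obtain ⟨_, hc', ⟨b, _⟩, hl, rfl⟩ := mem_thAtoms_s4.1 ha
  obtain ⟨c, -, hdisj, rfl⟩ := mem_reduceTh.1 hc'
  obtain ⟨hlc, hlL⟩ := Finset.mem_sdiff.1 hl
  rw [mem_posAtoms] at haL
  cases b
  · exact hlL (mem_negSet.2 haL)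
  · exact hdisj _ hlc haL

lemma satLit_of_mem_of_consistentWith {M : Finset ℕ} {L : Finset Lit} {l : Lit}
    (hM : consistentWith M L) (hl : l ∈ L) : satLit M l := by
  obtain ⟨b, a⟩ := l
  cases b
  · exact hM.2 a (mem_negAtoms.2 hl)
  · exact hM.1 (mem_posAtoms.2 hl)

lemma not_satLit_of_mem_negSet_of_consistentWith {M : Finset ℕ} {L : Finset Lit} {l : Lit}
    (hM : consistentWith M L) (hl : l ∈ negSet L) : ¬ satLit M l := by
  obtain ⟨b, a⟩ := l
  have hsat := satLit_of_mem_of_consistentWith hM (mem_negSet.1 hl)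
  cases b <;> simp_all [satLit, litNeg]

lemma consistentWith.of_subset {M X : Finset ℕ} {L : Finset Lit} (hX : consistentWith X L)
    (hpos : posAtoms L ⊆ M) (hMX : M ⊆ X) : consistentWith M L :=
  ⟨hpos, fun a ha hM => hX.2 a ha (hMX hM)⟩

lemma isModel_reduceTh_iff {M : Finset ℕ} {T : CTheory} {L : Finset Lit}
    (hM : consistentWith M L) : isModel M (reduceTh T L) ↔ isModel M T := by
  constructor
  · intro hred c hc
    by_cases hmeet : ∃ l ∈ c, l ∈ L
    · obtain ⟨l, hl, hlL⟩ := hmeet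
      exact ⟨l, hl, satLit_of_mem_of_consistentWith hM hlL⟩
    · have hdisj : ∀ l ∈ c, l ∉ L := fun l hl hlL => hmeet ⟨l, hl, hlL⟩
      obtain ⟨l, hl, hsat⟩ := hred _ (mem_reduceTh.2 ⟨c, hc, hdisj, rfl⟩)
      exact ⟨l, Finset.sdiff_subset hl, hsat⟩
  · intro hmod c' hc'
    obtain ⟨c, hc, -, rfl⟩ := mem_reduceTh.1 hc'
    obtain ⟨l, hl, hsat⟩ := hmod c hc
    exact ⟨l, Finset.mem_sdiff.2 ⟨hl, fun hneg =>
      not_satLit_of_mem_negSet_of_consistentWith hM hneg hsat⟩, hsat⟩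

lemma isMinModel.eq_of_isModel_reduceTh {X M : Finset ℕ} {T : CTheory} {L : Finset Lit}
    (hmin : isMinModel X T) (hcons : consistentWith X L) (hpos : posAtoms L ⊆ M) (hMX : M ⊆ X)
    (hM : isModel M (reduceTh T L)) : M = X := by
  by_contra hne
  exact hmin.2.2 M (Finset.ssubset_iff_subset_ne.2 ⟨hMX, hne⟩)
    ((isModel_reduceTh_iff (hcons.of_subset hpos hMX)).1 hM)

theorem minModel_reduce_general (T : CTheory) (L : Finset Lit) (X : Finset ℕ) (hcons : consistentWith X L)
    (hmin : isMinModel X T) :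
    isMinModel (X \ posAtoms L) (reduceTh T L) := by
  have hdisj := disjoint_posAtoms_thAtoms_reduceTh T L
  have hXred : isModel X (reduceTh T L) := (isModel_reduceTh_iff hcons).2 hmin.1
  refine ⟨(isModel_sdiff_of_disjoint hdisj).2 hXred, fun a ha => ?_, fun M' hM' hM'mod => ?_⟩
  · obtain ⟨haX, haL⟩ := Finset.mem_sdiff.1 ha
    by_contra hat
    have hsub : posAtoms L ⊆ X.erase a := fun b hb =>
      Finset.mem_erase.2 ⟨fun h => haL (h ▸ hb), hcons.1 hb⟩
    have herase := hmin.eq_of_isModel_reduceTh hcons hsub (Finset.erase_subset a X)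
      ((isModel_congr fun b hb => by simp [show b ≠ a by rintro rfl; exact hat hb]).2 hXred)
    rw [← herase] at haX
    exact Finset.notMem_erase a X haX
  · have hunion := hmin.eq_of_isModel_reduceTh (M := M' ∪ posAtoms L) hcons
      Finset.subset_union_right
      (Finset.union_subset (hM'.subset.trans Finset.sdiff_subset) hcons.1)
      ((isModel_union_of_disjoint hdisj).2 hM'mod)
    refine hM'.not_subset fun b hb => ?_
    obtain ⟨hbX, hbL⟩ := Finset.mem_sdiff.1 hb
    rw [← hunion, Finset.mem_union] at hbX
    exact hbX.resolve_right hbL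

/-- Let `T` be a CNF theory, `L ⊆ Lit(T)`, and `X ⊆ At(T)` consistent with `L`.
If `X` is a minimal model of `T`, then `X \ L⁺` is a minimal model of `T_L`. -/
theorem minModel_reduce (T : CTheory) (hok : ∀ c ∈ T, Clause.ok c)
    (L : Finset Lit) (hL : L ⊆ litsOf T)
    (X : Finset ℕ) (hX : X ⊆ thAtoms T) (hcons : consistentWith X L)
    (hmin : isMinModel X T) :
    isMinModel (X \ posAtoms L) (reduceTh T L) :=
  minModel_reduce_general T L X hcons hmin
end

section
/- Let t ≥ 2 and k ≥ 1 be integers, let X_1, …, X_k be pairwise disjoint sets of atoms, each of cardinality 2t − 1, and let F_{t,k} be the union over i = 1, …, k of the theories E_{t,X_i}, where E_{t,X} denotes the CNF theory of all clauses of t pairwise distinct (positive) atoms of X. Then F_{t,k} has exactly k(2t−1) atoms, exactly C(2t−1, t)^k minimal models, and every minimal model of F_{t,k} has exactly kt elements. -/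
open Classical

/-- `E_{t,X}`: the CNF theory of all clauses consisting of `t` pairwise distinct (positive)
atoms of `X`. -/
def Eth (t : ℕ) (X : Finset ℕ) : CTheory :=
  (X.powersetCard t).image (fun s => s.image (fun a => ((true, a) : Lit)))

/-!
A set `M` satisfies `E_{t,X}` exactly when it misses fewer than `t` atoms of `X`, and the
blocks `X_i` do not interact. Models are closed upwards, so `M` is minimal iff removing any
single atom destroys modelhood, i.e. iff `M` lies inside the blocks and misses exactly `t - 1`
atoms of each. With `|X_i| = 2t - 1` this means `M` picks exactly `t` atoms from each block,
independently, giving `C(2t-1, t)^k` minimal models of size `kt`.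
-/

open Finset Function

theorem forall_ssubset_not_iff_forall_erase_not {α : Type*} [DecidableEq α]
    {P : Finset α → Prop} (hP : ∀ ⦃s t⦄, s ⊆ t → P s → P t) {s : Finset α} :
    (∀ s' ⊂ s, ¬ P s') ↔ ∀ a ∈ s, ¬ P (s.erase a) := by
  refine ⟨fun h a ha => h _ (erase_ssubset ha), fun h s' hs' hPs' => ?_⟩
  obtain ⟨a, ha, hs'a⟩ := ssubset_iff_exists_subset_erase.1 hs'
  exact h a ha (hP hs'a hPs')

section DisjointFamily

variable {ι α : Type*} [DecidableEq α] {X : ι → Finset α}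

theorem card_sdiff_erase_of_mem (hX : Pairwise (Disjoint on X)) {M : Finset α} {a : α}
    {i : ι} (haM : a ∈ M) (hai : a ∈ X i) (j : ι) :
    #(X j \ M.erase a) = #(X j \ M) + if j = i then 1 else 0 := by
  split_ifs with hji
  · subst hji
    rw [sdiff_erase hai, card_insert_of_notMem fun h => (mem_sdiff.1 h).2 haM]
  · have haj : a ∉ X j := disjoint_right.1 (hX hji) hai
    rw [add_zero]
    congr 1
    ext b
    simp only [mem_sdiff, mem_erase]
    grind

variable [Fintype ι]

theorem biUnion_inter_eq_of_subset {M : Finset α} (hM : M ⊆ univ.biUnion X) :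
    univ.biUnion (fun i => X i ∩ M) = M := by
  rw [← biUnion_inter, inter_eq_right.2 hM]

theorem inter_biUnion_eq_of_subset (hX : Pairwise (Disjoint on X)) {f : ι → Finset α}
    (hf : ∀ i, f i ⊆ X i) (i : ι) : X i ∩ univ.biUnion f = f i := by
  ext a
  simp only [mem_inter, mem_biUnion, mem_univ, true_and]
  refine ⟨fun ⟨haX, j, haf⟩ => ?_, fun ha => ⟨hf i ha, i, ha⟩⟩
  obtain rfl | hji := eq_or_ne j i
  · exact haf
  · exact absurd haX (disjoint_left.1 (hX hji) (hf j haf))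

theorem card_eq_sum_card_inter (hX : Pairwise (Disjoint on X)) {M : Finset α}
    (hM : M ⊆ univ.biUnion X) : #M = ∑ i, #(X i ∩ M) := by
  conv_lhs => rw [← biUnion_inter_eq_of_subset hM]
  exact card_biUnion fun i _ j _ hij => (hX hij).mono inter_subset_left inter_subset_left

theorem card_filter_powerset_biUnion (hX : Pairwise (Disjoint on X)) (m : ι → ℕ) :
    #((univ.biUnion X).powerset.filter fun M => ∀ i, #(X i ∩ M) = m i) =
      ∏ i, (#(X i)).choose (m i) := by
  simp_rw [← card_powersetCard, ← Fintype.card_piFinset]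
  refine card_nbij' (fun M i => X i ∩ M) (fun f => univ.biUnion f) ?_ ?_ ?_ ?_
  · intro M hM
    simp only [mem_coe, mem_filter, mem_powerset] at hM
    simp [mem_powersetCard, hM.2]
  · intro f hf
    simp only [mem_coe, Fintype.mem_piFinset, mem_powersetCard] at hf
    simp only [mem_coe, mem_filter, mem_powerset,
      inter_biUnion_eq_of_subset hX fun i => (hf i).1]
    exact ⟨biUnion_mono fun i _ => (hf i).1, fun i => (hf i).2⟩
  · intro M hM
    simp only [mem_coe, mem_filter, mem_powerset] at hM
    exact biUnion_inter_eq_of_subset hM.1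
  · intro f hf
    simp only [mem_coe, Fintype.mem_piFinset, mem_powersetCard] at hf
    exact funext (inter_biUnion_eq_of_subset hX fun i => (hf i).1)

end DisjointFamily

theorem thAtoms_biUnion {ι : Type*} (s : Finset ι) (T : ι → CTheory) :
    thAtoms (s.biUnion T) = s.biUnion fun i => thAtoms (T i) := by
  rw [thAtoms, sup_biUnion, sup_eq_biUnion]
  rfl

theorem isModel_biUnion_iff {ι : Type*} {M : Finset ℕ} {s : Finset ι} {T : ι → CTheory} :
    isModel M (s.biUnion T) ↔ ∀ i ∈ s, isModel M (T i) := by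
  simp only [isModel, mem_biUnion]
  exact ⟨fun h i hi c hc => h c ⟨i, hi, hc⟩, fun h c ⟨i, hi, hc⟩ => h i hi c hc⟩

theorem clauseAtoms_image_pos (s : Finset ℕ) :
    clauseAtoms (s.image fun a => ((true, a) : Lit)) = s := by
  simp [clauseAtoms, image_image, comp_def]

theorem thAtoms_Eth {t : ℕ} {X : Finset ℕ} (ht : 1 ≤ t) (htX : t ≤ #X) :
    thAtoms (Eth t X) = X := by
  obtain ⟨n, rfl⟩ := Nat.exists_eq_add_of_le' ht
  rw [thAtoms, Eth, sup_image, show clauseAtoms ∘ _ = id from funext clauseAtoms_image_pos]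
  exact powersetCard_sup X n htX

theorem isModel_Eth_iff {t : ℕ} {X M : Finset ℕ} : isModel M (Eth t X) ↔ #(X \ M) < t := by
  rw [← powersetCard_eq_empty, eq_empty_iff_forall_notMem]
  simp only [isModel, Eth, forall_mem_image, exists_mem_image, satLit, if_true,
    mem_powersetCard, subset_sdiff, disjoint_left]
  grind

section ThresholdBlocks

variable {ι : Type*} [Fintype ι] {X : ι → Finset ℕ} {t : ℕ}

theorem thAtoms_biUnion_Eth (ht : 1 ≤ t) (htX : ∀ i, t ≤ #(X i)) :
    thAtoms (univ.biUnion fun i => Eth t (X i)) = univ.biUnion X := by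
  simp only [thAtoms_biUnion, thAtoms_Eth ht (htX _)]

theorem isModel_biUnion_Eth_iff {M : Finset ℕ} :
    isModel M (univ.biUnion fun i => Eth t (X i)) ↔ ∀ i, #(X i \ M) < t := by
  simp [isModel_biUnion_iff, isModel_Eth_iff]

theorem isMinModel_biUnion_Eth_iff (hX : Pairwise (Disjoint on X)) (ht : 1 ≤ t)
    (htX : ∀ i, t ≤ #(X i)) {M : Finset ℕ} :
    isMinModel M (univ.biUnion fun i => Eth t (X i)) ↔
      M ⊆ univ.biUnion X ∧ ∀ i, #(X i \ M) + 1 = t := by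
  have hmono : ∀ ⦃N N' : Finset ℕ⦄, N ⊆ N' → (∀ i, #(X i \ N) < t) → ∀ i, #(X i \ N') < t :=
    fun N N' h hN i => (card_le_card (sdiff_subset_sdiff subset_rfl h)).trans_lt (hN i)
  simp only [isMinModel, isModel_biUnion_Eth_iff, thAtoms_biUnion_Eth ht htX]
  rw [forall_ssubset_not_iff_forall_erase_not hmono]
  refine ⟨fun ⟨hmod, hsub, hmin⟩ => ⟨hsub, fun i => ?_⟩,
    fun ⟨hsub, htight⟩ => ⟨fun i => by have := htight i; omega, hsub, fun a haM herase => ?_⟩⟩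
  · by_contra hne
    obtain ⟨a, hai, ha⟩ := exists_mem_notMem_of_card_lt_card ((hmod i).trans_le (htX i))
    have haM : a ∈ M := by simpa [hai] using ha
    refine hmin a haM fun j => ?_
    rw [card_sdiff_erase_of_mem hX haM hai]
    split_ifs with hji
    · subst hji
      have := hmod j
      omega
    · simpa using hmod j
  · obtain ⟨i, -, hai⟩ := mem_biUnion.1 (hsub haM)
    have := herase i
    rw [card_sdiff_erase_of_mem hX haM hai, if_pos rfl] at this
    have := htight i
    omega

end ThresholdBlocks

theorem F_tk_minimal_models_general (t k : ℕ) (ht : 2 ≤ t)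
    (X : Fin k → Finset ℕ) (hcard : ∀ i, (X i).card = 2 * t - 1)
    (hdisj : ∀ i j, i ≠ j → Disjoint (X i) (X j))
    (F : CTheory) (hF : F = Finset.univ.biUnion (fun i => Eth t (X i))) :
    (thAtoms F).card = k * (2 * t - 1) ∧
    ((thAtoms F).powerset.filter (fun M => isMinModel M F)).card =
      (Nat.choose (2 * t - 1) t) ^ k ∧
    ∀ M : Finset ℕ, isMinModel M F → M.card = k * t := by
  have hX : Pairwise (Disjoint on X) := fun i j => hdisj i j
  have htX : ∀ i, t ≤ #(X i) := fun i => by have := hcard i; omega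
  have hatoms : thAtoms F = univ.biUnion X := hF ▸ thAtoms_biUnion_Eth (by omega) htX
  have hmin : ∀ M, isMinModel M F ↔ M ⊆ univ.biUnion X ∧ ∀ i, #(X i ∩ M) = t := by
    intro M
    rw [hF, isMinModel_biUnion_Eth_iff hX (by omega) htX]
    refine and_congr_right fun _ => forall_congr' fun i => ?_
    have := card_sdiff_add_card_inter (X i) M
    have := hcard i
    omega
  refine ⟨?_, ?_, fun M hM => ?_⟩
  · rw [hatoms, card_biUnion fun i _ j _ hij => hX hij]
    simp [hcard]
  · rw [hatoms, filter_congr fun M hM => (hmin M).trans (and_iff_right (mem_powerset.1 hM))]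
    convert card_filter_powerset_biUnion hX fun _ => t
    simp [hcard]
  · obtain ⟨hsub, hinter⟩ := (hmin M).1 hM
    simp [card_eq_sum_card_inter hX hsub, hinter]

/-- Let `t ≥ 2`, `k ≥ 1`, and let `X_1, …, X_k` be pairwise disjoint sets of atoms of
cardinality `2t − 1` each. Then `F_{t,k} = ⋃ᵢ E_{t,X_i}` has exactly `k(2t−1)` atoms, exactly
`C(2t−1, t)^k` minimal models, and every minimal model of `F_{t,k}` has exactly `kt`
elements. -/
theorem F_tk_minimal_models (t k : ℕ) (ht : 2 ≤ t) (hk : 1 ≤ k)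
    (X : Fin k → Finset ℕ) (hcard : ∀ i, (X i).card = 2 * t - 1)
    (hdisj : ∀ i j, i ≠ j → Disjoint (X i) (X j))
    (F : CTheory) (hF : F = Finset.univ.biUnion (fun i => Eth t (X i))) :
    (thAtoms F).card = k * (2 * t - 1) ∧
    ((thAtoms F).powerset.filter (fun M => isMinModel M F)).card =
      (Nat.choose (2 * t - 1) t) ^ k ∧
    ∀ M : Finset ℕ, isMinModel M F → M.card = k * t :=
  F_tk_minimal_models_general t k ht X hcard hdisj F hF
end
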